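/- arXiv:1706.03807 — 8 statements merged into one kernel-verified Lean document; each statement's English description precedes it below -/
import Mathlib

section
/- Suppose messages μ̂^s_{wv} : ℝ → ℝ, indexed by directed edges (w,v) ∈ 𝓔 and times s ≥ 1, satisfy the Min-Sum Splitting consensus recursion μ̂^s_{wv}(z) = (1 − 1/δ)φ_v(z) − (δ−1)μ̂^{s−1}_{wv}(z) + (δ−1)·Σ_{u∈N(v)} Γ_{uv} μ̂^{s−1}_{uv}(z) + φ_w(z) − δ·μ̂^{s−1}_{vw}(z) + δ·Σ_{u∈N(w)} Γ_{uw} μ̂^{s−1}_{uw}(z) for all z ∈ ℝ, where φ_v(z) := z²/2 − b_v z, and suppose the initial messages are quadratic: μ̂^0_{vw}(z) = (1/2)R̂^0_{vw} z² − r̂^0_{vw} z for some vectors R̂^0, r̂^0 ∈ ℝ^𝓔. Then for every s ≥ 1 and every (v,w) ∈ 𝓔 the messages remain quadratic, μ̂^s_{vw}(z) = (1/2)R̂^s_{vw} z² − r̂^s_{vw} z for all z ∈ ℝ, where the parameter vectors evolve as R̂^s = (2 − 1/δ)𝟏 + K̂(δ,Γ) R̂^{s−1} and r̂^s = ĥ(δ)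 + K̂(δ,Γ) r̂^{s−1}. Moreover, for any t ≥ 1 and v ∈ V, if 1 + δ·Σ_{w∈N(v)} Γ_{wv} R̂^t_{wv} > 0, then the belief function μ^t_v := φ_v + δ·Σ_{w∈N(v)} Γ_{wv} μ̂^t_{wv} has the unique global minimizer x^t_v = (b_v + δ·Σ_{w∈N(v)} Γ_{wv} r̂^t_{wv}) / (1 + δ·Σ_{w∈N(v)} Γ_{wv} R̂^t_{wv}). -/
open Finset

/-- The matrix `K̂(δ,Γ)` on directed edges, written as a kernel on ordered pairs
of vertices. For `e = (w,v)` and `f = (z,u)`: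
`δΓ_{zw}` if `u = w, z ∈ N(w)\{v}`; `δ(Γ_{vw}−1)` if `u = w, z = v`;
`(δ−1)Γ_{zv}` if `u = v, z ∈ N(v)\{w}`; `(δ−1)(Γ_{wv}−1)` if `u = v, z = w`;
`0` otherwise. -/
def Khat {V : Type*} (G : SimpleGraph V) [DecidableRel G.Adj] [DecidableEq V]
    (δ : ℝ) (Γ : Matrix V V ℝ) (e f : V × V) : ℝ :=
  if f.2 = e.1 ∧ G.Adj f.1 e.1 ∧ f.1 ≠ e.2 then δ * Γ f.1 e.1
  else if f.2 = e.1 ∧ f.1 = e.2 then δ * (Γ e.2 e.1 - 1)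
  else if f.2 = e.2 ∧ G.Adj f.1 e.2 ∧ f.1 ≠ e.1 then (δ - 1) * Γ f.1 e.2
  else if f.2 = e.2 ∧ f.1 = e.1 then (δ - 1) * (Γ e.1 e.2 - 1)
  else 0

/-- The affine iteration `x^s = h + K̂ x^{s-1}` on vectors indexed by the
directed edges `𝓔` of `G` (the sum ranges over directed edges only, so entries
at non-edge pairs are irrelevant). -/
noncomputable def msIter {V : Type*} [Fintype V] [DecidableEq V]
    (G : SimpleGraph V) [DecidableRel G.Adj]
    (h : V × V → ℝ) (Kh : V × V → V × V → ℝ) (x0 : V × V → ℝ) : ℕ → V × V → ℝ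
  | 0 => x0
  | s + 1 => fun e =>
      h e + ∑ f ∈ Finset.univ.filter (fun p : V × V => G.Adj p.1 p.2),
        Kh e f * msIter G h Kh x0 s f

lemma sum_khat {V : Type*} [Fintype V] [DecidableEq V]
    (G : SimpleGraph V) [DecidableRel G.Adj] (δ : ℝ) (Γ : Matrix V V ℝ)
    (x : V × V → ℝ) (v w : V) (hvw : G.Adj v w) :
    ∑ f ∈ Finset.univ.filter (fun p : V × V => G.Adj p.1 p.2),
        Khat G δ Γ (v, w) f * x f
      = δ * (∑ u ∈ G.neighborFinset v, Γ u v * x (u, v)) - δ * x (w, v)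
        + ((δ - 1) * (∑ u ∈ G.neighborFinset w, Γ u w * x (u, w)) - (δ - 1) * x (v, w)) := by
  have hne : v ≠ w := hvw.ne
  have hvw' : G.Adj w v := hvw.symm
  rw [Finset.sum_filter]
  have key : ∀ f : V × V,
      (if G.Adj f.1 f.2 then Khat G δ Γ (v, w) f * x f else 0)
      = (if f.2 = v ∧ G.Adj f.1 v then δ * Γ f.1 v * x f else 0)
        + (if f = (w, v) then -(δ * x f) else 0)
        + ((if f.2 = w ∧ G.Adj f.1 w then (δ - 1) * Γ f.1 w * x f else 0)
        + (if f = (v, w) then -((δ - 1) * x f) else 0)) := by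
    rintro ⟨p, q⟩
    simp only [Khat, Prod.mk.injEq]
    by_cases h1 : q = v <;> by_cases h2 : q = w <;> by_cases h3 : p = v <;>
      by_cases h4 : p = w <;> by_cases h5 : G.Adj p q <;>
      simp_all <;> ring
  rw [Finset.sum_congr rfl (fun f _ => key f)]
  rw [Finset.sum_add_distrib, Finset.sum_add_distrib, Finset.sum_add_distrib]
  have e1 : ∑ f : V × V, (if f.2 = v ∧ G.Adj f.1 v then δ * Γ f.1 v * x f else 0)
      = δ * ∑ u ∈ G.neighborFinset v, Γ u v * x (u, v) := by
    rw [Fintype.sum_prod_type]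
    simp only [ite_and]
    rw [Finset.sum_congr rfl (fun a _ => Finset.sum_ite_eq' Finset.univ v
      (fun u => if G.Adj a v then δ * Γ a v * x (a, u) else 0))]
    simp only [Finset.mem_univ, if_true]
    rw [Finset.mul_sum, SimpleGraph.neighborFinset_eq_filter, Finset.sum_filter]
    refine Finset.sum_congr rfl fun u _ => ?_
    by_cases h : G.Adj u v
    · simp [h, h.symm]; ring
    · rw [if_neg h, if_neg (fun hh : G.Adj v u => h hh.symm)]
  have e2 : ∑ f : V × V, (if f.2 = w ∧ G.Adj f.1 w then (δ - 1) * Γ f.1 w * x f else 0)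
      = (δ - 1) * ∑ u ∈ G.neighborFinset w, Γ u w * x (u, w) := by
    rw [Fintype.sum_prod_type]
    simp only [ite_and]
    rw [Finset.sum_congr rfl (fun a _ => Finset.sum_ite_eq' Finset.univ w
      (fun u => if G.Adj a w then (δ - 1) * Γ a w * x (a, u) else 0))]
    simp only [Finset.mem_univ, if_true]
    rw [Finset.mul_sum, SimpleGraph.neighborFinset_eq_filter, Finset.sum_filter]
    refine Finset.sum_congr rfl fun u _ => ?_
    by_cases h : G.Adj u w
    · simp [h, h.symm]; ring
    · rw [if_neg h, if_neg (fun hh : G.Adj w u => h hh.symm)]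
  rw [e1, e2, Finset.sum_ite_eq' Finset.univ (w, v), Finset.sum_ite_eq' Finset.univ (v, w)]
  simp only [Finset.mem_univ, if_true]
  ring

lemma quad_sum {V : Type*} (S : Finset V) (c A B : V → ℝ) (z : ℝ) :
    ∑ u ∈ S, c u * ((1 / 2) * A u * z ^ 2 - B u * z)
      = (1 / 2) * (∑ u ∈ S, c u * A u) * z ^ 2 - (∑ u ∈ S, c u * B u) * z := by
  rw [Finset.sum_congr rfl (fun u _ => by
    show c u * ((1 / 2) * A u * z ^ 2 - B u * z)
      = (c u * A u) * ((1 / 2) * z ^ 2) - (c u * B u) * z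
    ring)]
  rw [Finset.sum_sub_distrib, ← Finset.sum_mul, ← Finset.sum_mul]
  ring

lemma quad_min (D N z : ℝ) (hD : 0 < D) (hz : z ≠ N / D) :
    (1 + (D - 1)) / 2 * (N / D) ^ 2 - N * (N / D) < (1 + (D - 1)) / 2 * z ^ 2 - N * z := by
  have hD0 : D ≠ 0 := ne_of_gt hD
  have h1 : 0 < (z - N / D) ^ 2 := by
    have h2 : z - N / D ≠ 0 := sub_ne_zero.mpr hz
    positivity
  have key : (1 + (D - 1)) / 2 * z ^ 2 - N * z
      - ((1 + (D - 1)) / 2 * (N / D) ^ 2 - N * (N / D)) = D / 2 * (z - N / D) ^ 2 := by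
    field_simp
    ring
  nlinarith [mul_pos (half_pos hD) h1]

/-- Proposition 1: if the messages `μ̂^s_{wv}` satisfy the Min-Sum
Splitting consensus recursion for `φ_v(z) = z²/2 − b_v z` and the initial
messages are the quadratics `μ̂^0_{vw}(z) = ½ R̂^0_{vw} z² − r̂^0_{vw} z`, then all
messages remain quadratic with parameters evolving as
`R̂^s = (2 − 1/δ)𝟏 + K̂(δ,Γ) R̂^{s−1}` and `r̂^s = ĥ(δ) + K̂(δ,Γ) r̂^{s−1}`, where
`ĥ(δ)_{wv} = b_w + (1 − 1/δ) b_v`; moreover, whenever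
`1 + δ Σ_{w∈N(v)} Γ_{wv} R̂^t_{wv} > 0`, the belief
`μ^t_v = φ_v + δ Σ_{w∈N(v)} Γ_{wv} μ̂^t_{wv}` has the stated unique global
minimizer. -/
theorem stmt_0 {V : Type*} [Fintype V] [DecidableEq V]
    (G : SimpleGraph V) [DecidableRel G.Adj]
    (δ : ℝ) (hδ : δ ≠ 0) (Γ : Matrix V V ℝ) (hΓsym : Γ.IsSymm)
    (hΓ0 : ∀ v w, ¬ G.Adj v w → Γ v w = 0)
    (b : V → ℝ) (μ : ℕ → V → V → ℝ → ℝ)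
    (Rhat0 rhat0 : V × V → ℝ)
    (hinit : ∀ v w, G.Adj v w → ∀ z : ℝ,
      μ 0 v w z = (1 / 2) * Rhat0 (v, w) * z ^ 2 - rhat0 (v, w) * z)
    (hrec : ∀ s : ℕ, 1 ≤ s → ∀ w v, G.Adj w v → ∀ z : ℝ,
      μ s w v z =
        (1 - 1 / δ) * (z ^ 2 / 2 - b v * z)
          - (δ - 1) * μ (s - 1) w v z
          + (δ - 1) * ∑ u ∈ G.neighborFinset v, Γ u v * μ (s - 1) u v z
          + (z ^ 2 / 2 - b w * z)
          - δ * μ (s - 1) v w z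
          + δ * ∑ u ∈ G.neighborFinset w, Γ u w * μ (s - 1) u w z) :
    (∀ s : ℕ, 1 ≤ s → ∀ v w, G.Adj v w → ∀ z : ℝ,
      μ s v w z =
        (1 / 2) * msIter G (fun _ => 2 - 1 / δ) (Khat G δ Γ) Rhat0 s (v, w) * z ^ 2
          - msIter G (fun e => b e.1 + (1 - 1 / δ) * b e.2) (Khat G δ Γ) rhat0 s (v, w) * z)
    ∧
    (∀ t : ℕ, 1 ≤ t → ∀ v : V,
      0 < 1 + δ * ∑ w ∈ G.neighborFinset v,
          Γ w v * msIter G (fun _ => 2 - 1 / δ) (Khat G δ Γ) Rhat0 t (w, v) →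
      ∀ z : ℝ,
        z ≠ (b v + δ * ∑ w ∈ G.neighborFinset v,
              Γ w v * msIter G (fun e => b e.1 + (1 - 1 / δ) * b e.2) (Khat G δ Γ) rhat0 t (w, v))
            / (1 + δ * ∑ w ∈ G.neighborFinset v,
              Γ w v * msIter G (fun _ => 2 - 1 / δ) (Khat G δ Γ) Rhat0 t (w, v)) →
        (fun y : ℝ => (y ^ 2 / 2 - b v * y)
            + δ * ∑ w ∈ G.neighborFinset v, Γ w v * μ t w v y)
          ((b v + δ * ∑ w ∈ G.neighborFinset v,
              Γ w v * msIter G (fun e => b e.1 + (1 - 1 / δ) * b e.2) (Khat G δ Γ) rhat0 t (w, v))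
            / (1 + δ * ∑ w ∈ G.neighborFinset v,
              Γ w v * msIter G (fun _ => 2 - 1 / δ) (Khat G δ Γ) Rhat0 t (w, v)))
        < (fun y : ℝ => (y ^ 2 / 2 - b v * y)
            + δ * ∑ w ∈ G.neighborFinset v, Γ w v * μ t w v y) z) := by
  have part1 : ∀ s : ℕ, ∀ v w, G.Adj v w → ∀ z : ℝ,
      μ s v w z =
        (1 / 2) * msIter G (fun _ => 2 - 1 / δ) (Khat G δ Γ) Rhat0 s (v, w) * z ^ 2
          - msIter G (fun e => b e.1 + (1 - 1 / δ) * b e.2) (Khat G δ Γ) rhat0 s (v, w) * z := by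
    intro s
    induction s with
    | zero =>
      intro v w hvw z
      simpa [msIter] using hinit v w hvw z
    | succ s ih =>
      intro v w hvw z
      rw [hrec (s + 1) (by omega) v w hvw z]
      simp only [Nat.add_sub_cancel]
      rw [ih v w hvw z, ih w v hvw.symm z]
      have hs1 : ∑ u ∈ G.neighborFinset w, Γ u w * μ s u w z
          = ∑ u ∈ G.neighborFinset w, Γ u w *
            ((1 / 2) * msIter G (fun _ => 2 - 1 / δ) (Khat G δ Γ) Rhat0 s (u, w) * z ^ 2
              - msIter G (fun e => b e.1 + (1 - 1 / δ) * b e.2) (Khat G δ Γ) rhat0 s (u, w) * z) := by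
        refine Finset.sum_congr rfl fun u hu => ?_
        have h : G.Adj w u := by simpa using hu
        rw [ih u w h.symm z]
      have hs2 : ∑ u ∈ G.neighborFinset v, Γ u v * μ s u v z
          = ∑ u ∈ G.neighborFinset v, Γ u v *
            ((1 / 2) * msIter G (fun _ => 2 - 1 / δ) (Khat G δ Γ) Rhat0 s (u, v) * z ^ 2
              - msIter G (fun e => b e.1 + (1 - 1 / δ) * b e.2) (Khat G δ Γ) rhat0 s (u, v) * z) := by
        refine Finset.sum_congr rfl fun u hu => ?_
        have h : G.Adj v u := by simpa using hu
        rw [ih u v h.symm z]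
      rw [hs1, hs2, quad_sum, quad_sum]
      simp only [msIter]
      rw [sum_khat G δ Γ (msIter G (fun _ => 2 - 1 / δ) (Khat G δ Γ) Rhat0 s) v w hvw,
        sum_khat G δ Γ (msIter G (fun e => b e.1 + (1 - 1 / δ) * b e.2) (Khat G δ Γ) rhat0 s)
          v w hvw]
      ring
  refine ⟨fun s _ => part1 s, ?_⟩
  intro t ht v hD z hz
  have hq : ∀ y : ℝ,
      (y ^ 2 / 2 - b v * y) + δ * ∑ w ∈ G.neighborFinset v, Γ w v * μ t w v y
      = (1 + ((1 + δ * ∑ w ∈ G.neighborFinset v,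
            Γ w v * msIter G (fun _ => 2 - 1 / δ) (Khat G δ Γ) Rhat0 t (w, v)) - 1)) / 2 * y ^ 2
        - (b v + δ * ∑ w ∈ G.neighborFinset v,
            Γ w v * msIter G (fun e => b e.1 + (1 - 1 / δ) * b e.2) (Khat G δ Γ) rhat0 t (w, v))
          * y := by
    intro y
    have hs1 : ∑ w ∈ G.neighborFinset v, Γ w v * μ t w v y
        = ∑ w ∈ G.neighborFinset v, Γ w v *
          ((1 / 2) * msIter G (fun _ => 2 - 1 / δ) (Khat G δ Γ) Rhat0 t (w, v) * y ^ 2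
            - msIter G (fun e => b e.1 + (1 - 1 / δ) * b e.2) (Khat G δ Γ) rhat0 t (w, v) * y) := by
      refine Finset.sum_congr rfl fun w hw => ?_
      have h : G.Adj v w := by simpa using hw
      rw [part1 t w v h.symm y]
    rw [hs1, quad_sum]
    ring
  simp only
  rw [hq, hq]
  exact quad_min _ _ z hD hz
end

section
/- Let r̂^0 ∈ ℝ^𝓔 and define r̂^s := ĥ(δ) + K̂(δ,Γ) r̂^{s−1} for s ≥ 1. For each s ≥ 0 define node vectors r^s, q^s ∈ ℝ^V by r^s_v := b_v + δ·Σ_{w∈N(v)} Γ_{wv} r̂^s_{wv} and q^s_v := b_v − δ·Σ_{w∈N(v)} Γ_{vw} r̂^s_{vw}. Then for every s ≥ 1 the stacked vector satisfies (r^s, q^s)ᵀ = K(δ,Γ) (r^{s−1}, q^{s−1})ᵀ. -/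
open Finset

/-- The block matrix `K(δ,Γ)` on `V ⊕ V`:
`[[(1−δ)I − (1−δ)diag(Γ𝟏) + δΓ, δI], [δI − δ·diag(Γ𝟏) + (1−δ)Γ, (1−δ)I]]`,
where `(Γ𝟏)_v = Σ_{w∈N(v)} Γ_{vw}`. -/
noncomputable def Kblock {V : Type*} [Fintype V] [DecidableEq V]
    (G : SimpleGraph V) [DecidableRel G.Adj]
    (δ : ℝ) (Γ : Matrix V V ℝ) : Matrix (V ⊕ V) (V ⊕ V) ℝ :=
  Matrix.fromBlocks
    ((1 - δ) • (1 : Matrix V V ℝ)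
      - (1 - δ) • Matrix.diagonal (fun v => ∑ w ∈ G.neighborFinset v, Γ v w) + δ • Γ)
    (δ • (1 : Matrix V V ℝ))
    (δ • (1 : Matrix V V ℝ)
      - δ • Matrix.diagonal (fun v => ∑ w ∈ G.neighborFinset v, Γ v w) + (1 - δ) • Γ)
    ((1 - δ) • (1 : Matrix V V ℝ))


section Aux
variable {V : Type*} [Fintype V] [DecidableEq V] (G : SimpleGraph V) [DecidableRel G.Adj]
  (δ : ℝ) (Γ : Matrix V V ℝ)

lemma sum_edges (F : V × V → ℝ) :
    ∑ p ∈ Finset.univ.filter (fun p : V × V => G.Adj p.1 p.2), F p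
      = ∑ u, ∑ z ∈ G.neighborFinset u, F (z, u) := by
  rw [Finset.sum_filter, Fintype.sum_prod_type_right]
  refine Finset.sum_congr rfl fun u _ => ?_
  rw [← Finset.sum_filter]
  apply Finset.sum_congr _ fun _ _ => rfl
  ext z
  simp [SimpleGraph.mem_neighborFinset, G.adj_comm]

lemma Khat_sum {w v : V} (hwv : G.Adj w v) (x : V × V → ℝ) :
    ∑ f ∈ Finset.univ.filter (fun p : V × V => G.Adj p.1 p.2), Khat G δ Γ (w, v) f * x f
      = δ * ∑ z ∈ G.neighborFinset w, Γ z w * x (z, w) - δ * x (v, w)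
        + ((δ - 1) * ∑ z ∈ G.neighborFinset v, Γ z v * x (z, v) - (δ - 1) * x (w, v)) := by
  have hne : w ≠ v := hwv.ne
  rw [sum_edges]
  have hsupp : ∀ u ∈ (Finset.univ : Finset V), u ∉ ({w, v} : Finset V) →
      (∑ z ∈ G.neighborFinset u, Khat G δ Γ (w, v) (z, u) * x (z, u)) = 0 := by
    intro u _ hu
    simp only [Finset.mem_insert, Finset.mem_singleton, not_or] at hu
    apply Finset.sum_eq_zero
    intro z _
    simp [Khat, hu.1, hu.2]
  rw [← Finset.sum_subset (Finset.subset_univ ({w, v} : Finset V)) hsupp,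
    Finset.sum_pair hne]
  have h1 : ∑ z ∈ G.neighborFinset w, Khat G δ Γ (w, v) (z, w) * x (z, w)
      = δ * ∑ z ∈ G.neighborFinset w, Γ z w * x (z, w) - δ * x (v, w) := by
    have : ∀ z ∈ G.neighborFinset w,
        Khat G δ Γ (w, v) (z, w) * x (z, w)
          = δ * (Γ z w * x (z, w)) - (if z = v then δ * x (v, w) else 0) := by
      intro z hz
      rw [SimpleGraph.mem_neighborFinset] at hz
      by_cases hzv : z = v
      · subst hzv
        simp only [Khat]
        simp [hne.symm]
        ring
      · simp only [Khat]
        simp [hz.symm, hzv]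
        ring
    rw [Finset.sum_congr rfl this, Finset.sum_sub_distrib, ← Finset.mul_sum,
      Finset.sum_ite_eq' _ v]
    simp [hwv]
  have h2 : ∑ z ∈ G.neighborFinset v, Khat G δ Γ (w, v) (z, v) * x (z, v)
      = (δ - 1) * ∑ z ∈ G.neighborFinset v, Γ z v * x (z, v) - (δ - 1) * x (w, v) := by
    have : ∀ z ∈ G.neighborFinset v,
        Khat G δ Γ (w, v) (z, v) * x (z, v)
          = (δ - 1) * (Γ z v * x (z, v)) - (if z = w then (δ - 1) * x (w, v) else 0) := by
      intro z hz
      rw [SimpleGraph.mem_neighborFinset] at hz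
      by_cases hzw : z = w
      · subst hzw
        simp only [Khat]
        simp [hne, hne.symm]
        ring
      · simp only [Khat]
        simp [hz.symm, hzw, hne, hne.symm]
        ring
    rw [Finset.sum_congr rfl this, Finset.sum_sub_distrib, ← Finset.mul_sum,
      Finset.sum_ite_eq' _ w]
    simp [hwv.symm]
  rw [h1, h2]

end Aux

/-- if `r̂^s = ĥ(δ) + K̂(δ,Γ) r̂^{s−1}` on directed edges, then the
node vectors `r^s_v := b_v + δ Σ_{w∈N(v)} Γ_{wv} r̂^s_{wv}` and
`q^s_v := b_v − δ Σ_{w∈N(v)} Γ_{vw} r̂^s_{vw}` satisfy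
`(r^s, q^s)ᵀ = K(δ,Γ) (r^{s−1}, q^{s−1})ᵀ` for every `s ≥ 1`. -/
theorem stmt_1 {V : Type*} [Fintype V] [DecidableEq V]
    (G : SimpleGraph V) [DecidableRel G.Adj]
    (δ : ℝ) (hδ : δ ≠ 0) (Γ : Matrix V V ℝ) (hΓsym : Γ.IsSymm)
    (hΓ0 : ∀ v w, ¬ G.Adj v w → Γ v w = 0)
    (b : V → ℝ) (rhat0 : V × V → ℝ)
    (rhat : ℕ → V × V → ℝ)
    (hrhat : rhat = msIter G (fun e => b e.1 + (1 - 1 / δ) * b e.2) (Khat G δ Γ) rhat0)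
    (r q : ℕ → V → ℝ)
    (hr : ∀ s v, r s v = b v + δ * ∑ w ∈ G.neighborFinset v, Γ w v * rhat s (w, v))
    (hq : ∀ s v, q s v = b v - δ * ∑ w ∈ G.neighborFinset v, Γ v w * rhat s (v, w)) :
    ∀ s : ℕ, 1 ≤ s →
      Sum.elim (r s) (q s) =
        (Kblock G δ Γ).mulVec (Sum.elim (r (s - 1)) (q (s - 1))) := by
  intro s hs
  obtain ⟨t, rfl⟩ : ∃ t, s = t + 1 := ⟨s - 1, (Nat.succ_pred_eq_of_pos hs).symm⟩
  have hsym : ∀ a c : V, Γ a c = Γ c a := fun a c => by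
    conv_lhs => rw [← hΓsym]
    rfl
  have hstep : ∀ w v : V, G.Adj w v → rhat (t + 1) (w, v)
      = b w + (1 - 1 / δ) * b v
        + (δ * ∑ z ∈ G.neighborFinset w, Γ z w * rhat t (z, w) - δ * rhat t (v, w)
          + ((δ - 1) * ∑ z ∈ G.neighborFinset v, Γ z v * rhat t (z, v)
            - (δ - 1) * rhat t (w, v))) := by
    intro w v hwv
    have huf : rhat (t + 1) (w, v)
        = (b w + (1 - 1 / δ) * b v)
          + ∑ f ∈ Finset.univ.filter (fun p : V × V => G.Adj p.1 p.2),
              Khat G δ Γ (w, v) f * rhat t f := by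
      conv_lhs => rw [hrhat]
      conv_rhs => rw [hrhat]
      simp only [msIter]
    rw [huf, Khat_sum G δ Γ hwv]
  have hGamma_mv : ∀ v : V, ∀ x : V → ℝ,
      Γ.mulVec x v = ∑ w ∈ G.neighborFinset v, Γ v w * x w := by
    intro v x
    simp only [Matrix.mulVec, dotProduct]
    exact (Finset.sum_subset (Finset.subset_univ _) (fun z _ hz => by
      rw [hΓ0 v z (by simpa [SimpleGraph.mem_neighborFinset] using hz), zero_mul])).symm
  funext x
  rcases x with v | v
  · -- inl case
    have hconv : ∑ w ∈ G.neighborFinset v, Γ v w * rhat t (w, v)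
        = ∑ w ∈ G.neighborFinset v, Γ w v * rhat t (w, v) :=
      Finset.sum_congr rfl fun w _ => by rw [hsym v w]
    have key : ∀ w ∈ G.neighborFinset v, Γ w v * rhat (t + 1) (w, v)
        = Γ v w * b w
          + ((1 - 1 / δ) * b v) * Γ v w
          + δ * (Γ v w * (∑ z ∈ G.neighborFinset w, Γ z w * rhat t (z, w)))
          - δ * (Γ v w * rhat t (v, w))
          + ((δ - 1) * (∑ z ∈ G.neighborFinset v, Γ z v * rhat t (z, v))) * Γ v w
          - (δ - 1) * (Γ v w * rhat t (w, v)) := by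
      intro w hw
      rw [SimpleGraph.mem_neighborFinset] at hw
      rw [hstep w v hw.symm, hsym w v]
      ring
    have key2 : ∀ w ∈ G.neighborFinset v,
        Γ v w * (b w + δ * ∑ z ∈ G.neighborFinset w, Γ z w * rhat t (z, w))
          = Γ v w * b w
            + δ * (Γ v w * (∑ z ∈ G.neighborFinset w, Γ z w * rhat t (z, w))) := by
      intro w _
      ring
    simp only [Nat.add_sub_cancel, Sum.elim_inl]
    rw [Kblock, Matrix.fromBlocks_mulVec, Sum.elim_inl]
    simp only [Matrix.add_mulVec, Matrix.sub_mulVec, Matrix.smul_mulVec,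
      Matrix.one_mulVec, Pi.add_apply, Pi.sub_apply, Pi.smul_apply, smul_eq_mul,
      Matrix.mulVec_diagonal]
    rw [hGamma_mv]
    simp only [Function.comp_apply, Sum.elim_inl, Sum.elim_inr]
    simp only [hr, hq]
    rw [Finset.sum_congr rfl key, Finset.sum_congr rfl key2]
    simp only [Finset.sum_add_distrib, Finset.sum_sub_distrib, ← Finset.mul_sum]
    rw [hconv]
    field_simp
    ring
  · -- inr case
    have hconv : ∑ w ∈ G.neighborFinset v, Γ v w * rhat t (w, v)
        = ∑ w ∈ G.neighborFinset v, Γ w v * rhat t (w, v) :=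
      Finset.sum_congr rfl fun w _ => by rw [hsym v w]
    have key : ∀ w ∈ G.neighborFinset v, Γ v w * rhat (t + 1) (v, w)
        = (1 - 1 / δ) * (Γ v w * b w)
          + b v * Γ v w
          + (δ * (∑ z ∈ G.neighborFinset v, Γ z v * rhat t (z, v))) * Γ v w
          - δ * (Γ v w * rhat t (w, v))
          + (δ - 1) * (Γ v w * (∑ z ∈ G.neighborFinset w, Γ z w * rhat t (z, w)))
          - (δ - 1) * (Γ v w * rhat t (v, w)) := by
      intro w hw
      rw [SimpleGraph.mem_neighborFinset] at hw
      rw [hstep v w hw]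
      ring
    have key2 : ∀ w ∈ G.neighborFinset v,
        Γ v w * (b w + δ * ∑ z ∈ G.neighborFinset w, Γ z w * rhat t (z, w))
          = Γ v w * b w
            + δ * (Γ v w * (∑ z ∈ G.neighborFinset w, Γ z w * rhat t (z, w))) := by
      intro w _
      ring
    simp only [Nat.add_sub_cancel, Sum.elim_inr]
    rw [Kblock, Matrix.fromBlocks_mulVec, Sum.elim_inr]
    simp only [Matrix.add_mulVec, Matrix.sub_mulVec, Matrix.smul_mulVec,
      Matrix.one_mulVec, Pi.add_apply, Pi.sub_apply, Pi.smul_apply, smul_eq_mul,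
      Matrix.mulVec_diagonal]
    rw [hGamma_mv]
    simp only [Function.comp_apply, Sum.elim_inl, Sum.elim_inr]
    simp only [hr, hq]
    rw [Finset.sum_congr rfl key, Finset.sum_congr rfl key2]
    simp only [Finset.sum_add_distrib, Finset.sum_sub_distrib, ← Finset.mul_sum]
    rw [hconv]
    field_simp
    ring
end

section
/- Let R̂^0, r̂^0 ∈ ℝ^𝓔 and define, for s ≥ 1, R̂^s := (2 − 1/δ)𝟏 + K̂(δ,Γ) R̂^{s−1} and r̂^s := ĥ(δ) + K̂(δ,Γ) r̂^{s−1}. Define initial node vectors R^0_v := 1 + δ·Σ_{w∈N(v)} Γ_{wv} R̂^0_{wv}, Q^0_v := 1 − δ·Σ_{w∈N(v)} Γ_{vw} R̂^0_{vw}, r^0_v := b_v + δ·Σ_{w∈N(v)} Γ_{wv} r̂^0_{wv}, q^0_v := b_v − δ·Σ_{w∈N(v)} Γ_{vw} r̂^0_{vw}, and set (r^t, q^t)ᵀ := K(δ,Γ)^t (r^0, q^0)ᵀ and (R^t, Q^t)ᵀ := K(δ,Γ)^t (R^0, Q^0)ᵀ. Then for every t ≥ 1 and every v ∈ V one has b_v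 + δ·Σ_{w∈N(v)} Γ_{wv} r̂^t_{wv} = r^t_v and 1 + δ·Σ_{w∈N(v)} Γ_{wv} R̂^t_{wv} = R^t_v; in particular, the output (b_v + δ·Σ_{w∈N(v)} Γ_{wv} r̂^t_{wv}) / (1 + δ·Σ_{w∈N(v)} Γ_{wv} R̂^t_{wv}) of the edge-based Min-Sum Splitting iteration equals r^t_v / R^t_v. -/
open Finset

lemma khat_sum {V : Type*} [Fintype V] [DecidableEq V] (G : SimpleGraph V) [DecidableRel G.Adj]
    (δ : ℝ) (Γ : Matrix V V ℝ) (x : V × V → ℝ) {w v : V} (hwv : G.Adj w v) :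
    ∑ f ∈ Finset.univ.filter (fun p : V × V => G.Adj p.1 p.2), Khat G δ Γ (w, v) f * x f
      = δ * (∑ z ∈ G.neighborFinset w, Γ z w * x (z, w)) - δ * x (v, w)
        + ((δ - 1) * (∑ z ∈ G.neighborFinset v, Γ z v * x (z, v)) - (δ - 1) * x (w, v)) := by
  have hne : w ≠ v := hwv.ne
  rw [Finset.sum_subset (Finset.filter_subset _ Finset.univ)]
  · rw [Fintype.sum_prod_type, Finset.sum_comm]
    rw [← Finset.sum_subset (Finset.subset_univ ({w, v} : Finset V))]
    · rw [Finset.sum_pair hne]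
      have h1 : ∑ z : V, Khat G δ Γ (w, v) (z, w) * x (z, w)
          = δ * (∑ z ∈ G.neighborFinset w, Γ z w * x (z, w)) - δ * x (v, w) := by
        have key : ∀ z : V, Khat G δ Γ (w, v) (z, w) * x (z, w)
            = (if z ∈ G.neighborFinset w then δ * (Γ z w * x (z, w)) else 0)
              + (if z = v then -(δ * x (v, w)) else 0) := by
          intro z
          by_cases hz : z = v
          · subst hz
            simp only [Khat, SimpleGraph.mem_neighborFinset]
            rw [if_neg (by rintro ⟨-, -, h⟩; exact h rfl), if_pos (by simp)]
            simp [hwv]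
            ring
          · by_cases ha : G.Adj w z
            · simp only [Khat, SimpleGraph.mem_neighborFinset]
              rw [if_pos (by simp [ha.symm, hz])]
              simp [ha, hz, mul_assoc]
            · simp only [Khat, SimpleGraph.mem_neighborFinset]
              rw [if_neg (by rintro ⟨-, h, -⟩; exact ha h.symm), if_neg (by rintro ⟨-, h⟩; exact hz h),
                if_neg (by rintro ⟨h, -⟩; exact hne h), if_neg (by rintro ⟨h, -⟩; exact hne h)]
              simp [ha, hz]
        rw [Finset.sum_congr rfl (fun z _ => key z), Finset.sum_add_distrib]
        simp [Finset.sum_ite_mem, Finset.mul_sum, sub_eq_add_neg,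
          SimpleGraph.neighborFinset_eq_filter, Finset.sum_filter]
      have h2 : ∑ z : V, Khat G δ Γ (w, v) (z, v) * x (z, v)
          = (δ - 1) * (∑ z ∈ G.neighborFinset v, Γ z v * x (z, v)) - (δ - 1) * x (w, v) := by
        have key : ∀ z : V, Khat G δ Γ (w, v) (z, v) * x (z, v)
            = (if z ∈ G.neighborFinset v then (δ - 1) * (Γ z v * x (z, v)) else 0)
              + (if z = w then -((δ - 1) * x (w, v)) else 0) := by
          intro z
          by_cases hz : z = w
          · subst hz
            simp only [Khat, SimpleGraph.mem_neighborFinset]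
            rw [if_neg (by rintro ⟨h, -⟩; exact hne h.symm), if_neg (by rintro ⟨h, -⟩; exact hne h.symm),
              if_neg (by rintro ⟨-, -, h⟩; exact h rfl), if_pos (by simp)]
            simp [hwv.symm]
            ring
          · by_cases ha : G.Adj v z
            · simp only [Khat, SimpleGraph.mem_neighborFinset]
              rw [if_neg (by rintro ⟨h, -⟩; exact hne h.symm), if_neg (by rintro ⟨h, -⟩; exact hne h.symm),
                if_pos (by simp [ha.symm, hz])]
              simp [ha, hz, mul_assoc]
            · simp only [Khat, SimpleGraph.mem_neighborFinset]
              rw [if_neg (by rintro ⟨h, -⟩; exact hne h.symm), if_neg (by rintro ⟨h, -⟩; exact hne h.symm),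
                if_neg (by rintro ⟨-, h, -⟩; exact ha h.symm), if_neg (by rintro ⟨-, h⟩; exact hz h)]
              simp [ha, hz]
        rw [Finset.sum_congr rfl (fun z _ => key z), Finset.sum_add_distrib]
        simp [Finset.sum_ite_mem, Finset.mul_sum, sub_eq_add_neg,
          SimpleGraph.neighborFinset_eq_filter, Finset.sum_filter]
      rw [h1, h2]
    · intro u _ hu
      simp only [Finset.mem_insert, Finset.mem_singleton, not_or] at hu
      apply Finset.sum_eq_zero
      intro z _
      have h0 : Khat G δ Γ (w, v) (z, u) = 0 := by
        simp only [Khat]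
        rw [if_neg (by rintro ⟨h, -⟩; exact hu.1 h), if_neg (by rintro ⟨h, -⟩; exact hu.1 h),
          if_neg (by rintro ⟨h, -⟩; exact hu.2 h), if_neg (by rintro ⟨h, -⟩; exact hu.2 h)]
      rw [h0, zero_mul]
  · intro f _ hf
    simp only [Finset.mem_filter, Finset.mem_univ, true_and] at hf
    have h0 : Khat G δ Γ (w, v) f = 0 := by
      simp only [Khat]
      rw [if_neg, if_neg, if_neg, if_neg]
      · rintro ⟨h1, h2⟩; exact hf (h1 ▸ h2 ▸ hwv)
      · rintro ⟨h1, h2, _⟩; exact hf (h1 ▸ h2)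
      · rintro ⟨h1, h2⟩; exact hf (h1 ▸ h2 ▸ hwv.symm)
      · rintro ⟨h1, h2, _⟩; exact hf (h1 ▸ h2)
    rw [h0, zero_mul]

lemma kblock_inl {V : Type*} [Fintype V] [DecidableEq V]
    (G : SimpleGraph V) [DecidableRel G.Adj] (δ : ℝ) (Γ : Matrix V V ℝ)
    (p q : V → ℝ) (v : V) :
    (Kblock G δ Γ).mulVec (Sum.elim p q) (Sum.inl v)
      = (1 - δ) * p v - (1 - δ) * (∑ w ∈ G.neighborFinset v, Γ v w) * p v
        + (∑ u : V, δ * (Γ v u * p u)) + δ * q v := by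
  simp [Kblock, Matrix.fromBlocks_mulVec, Matrix.add_mulVec, Matrix.sub_mulVec,
    Matrix.smul_mulVec, Matrix.one_mulVec, Matrix.mulVec_diagonal,
    Matrix.mulVec, dotProduct, Finset.mul_sum, Matrix.one_apply,
    Matrix.diagonal_apply, mul_ite, ite_mul, mul_zero, zero_mul, Finset.sum_ite_eq,
    Finset.sum_ite_eq', Finset.sum_add_distrib, Finset.sum_sub_distrib, Finset.sum_mul]
  simp only [sub_mul, add_mul, ite_mul, zero_mul, Finset.sum_add_distrib,
    Finset.sum_sub_distrib, Finset.sum_ite_eq, Finset.mem_univ, if_true, Finset.sum_mul]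
  rw [show ∑ x ∈ G.neighborFinset v, 1 * Γ v x * p v = ∑ x ∈ G.neighborFinset v, p v * Γ v x
    from Finset.sum_congr rfl fun x _ => by ring]
  ring

lemma kblock_inr {V : Type*} [Fintype V] [DecidableEq V]
    (G : SimpleGraph V) [DecidableRel G.Adj] (δ : ℝ) (Γ : Matrix V V ℝ)
    (p q : V → ℝ) (v : V) :
    (Kblock G δ Γ).mulVec (Sum.elim p q) (Sum.inr v)
      = δ * p v - δ * (∑ w ∈ G.neighborFinset v, Γ v w) * p v
        + (∑ u : V, (1 - δ) * (Γ v u * p u)) + (1 - δ) * q v := by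
  simp [Kblock, Matrix.fromBlocks_mulVec, Matrix.add_mulVec, Matrix.sub_mulVec,
    Matrix.smul_mulVec, Matrix.one_mulVec, Matrix.mulVec_diagonal,
    Matrix.mulVec, dotProduct, Finset.mul_sum, Matrix.one_apply,
    Matrix.diagonal_apply, mul_ite, ite_mul, mul_zero, zero_mul, Finset.sum_ite_eq,
    Finset.sum_ite_eq', Finset.sum_add_distrib, Finset.sum_sub_distrib, Finset.sum_mul]
  simp only [sub_mul, add_mul, ite_mul, zero_mul, Finset.sum_add_distrib,
    Finset.sum_sub_distrib, Finset.sum_ite_eq, Finset.mem_univ, if_true, Finset.sum_mul]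
  simp only [mul_assoc]

lemma step_lemma {V : Type*} [Fintype V] [DecidableEq V]
    (G : SimpleGraph V) [DecidableRel G.Adj]
    (δ : ℝ) (hδ : δ ≠ 0) (Γ : Matrix V V ℝ) (hΓsym : Γ.IsSymm)
    (hΓ0 : ∀ v w, ¬ G.Adj v w → Γ v w = 0)
    (c : V → ℝ) (x x' : V × V → ℝ)
    (hx' : ∀ e : V × V, x' e = (c e.1 + (1 - 1 / δ) * c e.2)
        + ∑ f ∈ Finset.univ.filter (fun p : V × V => G.Adj p.1 p.2), Khat G δ Γ e f * x f) :
    (Kblock G δ Γ).mulVec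
        (Sum.elim (fun v => c v + δ * ∑ w ∈ G.neighborFinset v, Γ w v * x (w, v))
          (fun v => c v - δ * ∑ w ∈ G.neighborFinset v, Γ v w * x (v, w)))
      = Sum.elim (fun v => c v + δ * ∑ w ∈ G.neighborFinset v, Γ w v * x' (w, v))
          (fun v => c v - δ * ∑ w ∈ G.neighborFinset v, Γ v w * x' (v, w)) := by
  have hsym : ∀ a b : V, Γ a b = Γ b a := fun a b => hΓsym.apply b a
  funext s
  cases s with
  | inl v =>
    rw [kblock_inl]
    simp only [Sum.elim_inl]
    -- abbreviations
    have hU : (∑ u : V, δ * (Γ v u * (c u + δ * ∑ w ∈ G.neighborFinset u, Γ w u * x (w, u))))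
        = δ * (∑ w ∈ G.neighborFinset v, Γ w v * c w)
          + δ * δ * (∑ w ∈ G.neighborFinset v,
              Γ w v * ∑ z ∈ G.neighborFinset w, Γ z w * x (z, w)) := by
      rw [← Finset.sum_subset (Finset.subset_univ (G.neighborFinset v))
        (fun u _ hu => by
          rw [hΓ0 v u (by simpa using hu)]; ring)]
      rw [Finset.sum_congr rfl (fun u _ => by
        rw [hsym v u]; ring : ∀ u ∈ G.neighborFinset v,
          δ * (Γ v u * (c u + δ * ∑ w ∈ G.neighborFinset u, Γ w u * x (w, u)))
          = δ * (Γ u v * c u) + δ * δ * (Γ u v * ∑ z ∈ G.neighborFinset u, Γ z u * x (z, u)))]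
      rw [Finset.sum_add_distrib, ← Finset.mul_sum, ← Finset.mul_sum]
    rw [hU]
    have hterm : ∀ w ∈ G.neighborFinset v, Γ w v * x' (w, v)
        = (Γ w v * c w + δ * (Γ w v * ∑ z ∈ G.neighborFinset w, Γ z w * x (z, w)))
          + ((1 - 1/δ) * c v + (δ - 1) * (∑ z ∈ G.neighborFinset v, Γ z v * x (z, v))) * Γ w v
          - δ * (Γ w v * x (v, w)) - (δ - 1) * (Γ w v * x (w, v)) := by
      intro w hw
      have hadj : G.Adj w v := (by simpa using hw : G.Adj v w).symm
      rw [hx', khat_sum G δ Γ x hadj]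
      ring
    rw [Finset.sum_congr rfl hterm]
    simp only [Finset.sum_sub_distrib, Finset.sum_add_distrib]
    rw [← Finset.mul_sum, ← Finset.mul_sum, ← Finset.mul_sum, ← Finset.mul_sum]
    rw [show (∑ w ∈ G.neighborFinset v, Γ w v * x (v, w))
        = ∑ w ∈ G.neighborFinset v, Γ v w * x (v, w)
      from Finset.sum_congr rfl fun w _ => by rw [hsym w v]]
    rw [show (∑ w ∈ G.neighborFinset v, Γ w v : ℝ) = ∑ w ∈ G.neighborFinset v, Γ v w
      from Finset.sum_congr rfl fun w _ => by rw [hsym w v]]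
    field_simp
    ring
  | inr v =>
    rw [kblock_inr]
    simp only [Sum.elim_inr]
    have hU : (∑ u : V, (1 - δ) * (Γ v u * (c u + δ * ∑ w ∈ G.neighborFinset u, Γ w u * x (w, u))))
        = (1 - δ) * (∑ w ∈ G.neighborFinset v, Γ w v * c w)
          + (1 - δ) * δ * (∑ w ∈ G.neighborFinset v,
              Γ w v * ∑ z ∈ G.neighborFinset w, Γ z w * x (z, w)) := by
      rw [← Finset.sum_subset (Finset.subset_univ (G.neighborFinset v))
        (fun u _ hu => by
          rw [hΓ0 v u (by simpa using hu)]; ring)]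
      rw [Finset.sum_congr rfl (fun u _ => by
        rw [hsym v u]; ring : ∀ u ∈ G.neighborFinset v,
          (1 - δ) * (Γ v u * (c u + δ * ∑ w ∈ G.neighborFinset u, Γ w u * x (w, u)))
          = (1 - δ) * (Γ u v * c u)
            + (1 - δ) * δ * (Γ u v * ∑ z ∈ G.neighborFinset u, Γ z u * x (z, u)))]
      rw [Finset.sum_add_distrib, ← Finset.mul_sum, ← Finset.mul_sum]
    rw [hU]
    have hterm : ∀ w ∈ G.neighborFinset v, Γ v w * x' (v, w)
        = (Γ w v * c w * (1 - 1/δ) + (δ - 1) * (Γ w v * ∑ z ∈ G.neighborFinset w, Γ z w * x (z, w)))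
          + (c v + δ * (∑ z ∈ G.neighborFinset v, Γ z v * x (z, v))) * Γ w v
          - δ * (Γ w v * x (w, v)) - (δ - 1) * (Γ v w * x (v, w)) := by
      intro w hw
      have hadj : G.Adj v w := (by simpa using hw : G.Adj v w)
      rw [hx', khat_sum G δ Γ x hadj, hsym v w]
      ring
    rw [Finset.sum_congr rfl hterm]
    simp only [Finset.sum_sub_distrib, Finset.sum_add_distrib]
    rw [← Finset.mul_sum, ← Finset.mul_sum, ← Finset.mul_sum, ← Finset.mul_sum, ← Finset.sum_mul]
    rw [show (∑ w ∈ G.neighborFinset v, Γ w v : ℝ) = ∑ w ∈ G.neighborFinset v, Γ v w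
      from Finset.sum_congr rfl fun w _ => by rw [hsym w v]]
    field_simp
    ring

lemma iter_eq {V : Type*} [Fintype V] [DecidableEq V]
    (G : SimpleGraph V) [DecidableRel G.Adj]
    (δ : ℝ) (hδ : δ ≠ 0) (Γ : Matrix V V ℝ) (hΓsym : Γ.IsSymm)
    (hΓ0 : ∀ v w, ¬ G.Adj v w → Γ v w = 0)
    (c : V → ℝ) (x0 : V × V → ℝ) : ∀ t : ℕ,
    ((Kblock G δ Γ) ^ t).mulVec
        (Sum.elim (fun v => c v + δ * ∑ w ∈ G.neighborFinset v, Γ w v * x0 (w, v))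
          (fun v => c v - δ * ∑ w ∈ G.neighborFinset v, Γ v w * x0 (v, w)))
      = Sum.elim
          (fun v => c v + δ * ∑ w ∈ G.neighborFinset v,
            Γ w v * msIter G (fun e => c e.1 + (1 - 1 / δ) * c e.2) (Khat G δ Γ) x0 t (w, v))
          (fun v => c v - δ * ∑ w ∈ G.neighborFinset v,
            Γ v w * msIter G (fun e => c e.1 + (1 - 1 / δ) * c e.2) (Khat G δ Γ) x0 t (v, w)) := by
  intro t
  induction t with
  | zero => simp [msIter, Matrix.one_mulVec]
  | succ t ih =>
    rw [pow_succ', ← Matrix.mulVec_mulVec, ih]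
    exact step_lemma G δ hδ Γ hΓsym hΓ0 c
      (msIter G (fun e => c e.1 + (1 - 1 / δ) * c e.2) (Khat G δ Γ) x0 t)
      (msIter G (fun e => c e.1 + (1 - 1 / δ) * c e.2) (Khat G δ Γ) x0 (t + 1))
      (fun e => rfl)


/-- run the edge-based Min-Sum Splitting iterations
`R̂^s = (2 − 1/δ)𝟏 + K̂(δ,Γ) R̂^{s−1}`, `r̂^s = ĥ(δ) + K̂(δ,Γ) r̂^{s−1}`, and define
the initial node vectors `r^0, q^0, R^0, Q^0` from the initial edge vectors, and
`(r^t, q^t) := K(δ,Γ)^t (r^0, q^0)`, `(R^t, Q^t) := K(δ,Γ)^t (R^0, Q^0)`. Then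
for every `t ≥ 1` and `v`: `b_v + δ Σ_{w∈N(v)} Γ_{wv} r̂^t_{wv} = r^t_v`,
`1 + δ Σ_{w∈N(v)} Γ_{wv} R̂^t_{wv} = R^t_v`, and the output of the edge-based
iteration equals `r^t_v / R^t_v`. -/
theorem stmt_3 {V : Type*} [Fintype V] [DecidableEq V]
    (G : SimpleGraph V) [DecidableRel G.Adj]
    (δ : ℝ) (hδ : δ ≠ 0) (Γ : Matrix V V ℝ) (hΓsym : Γ.IsSymm)
    (hΓ0 : ∀ v w, ¬ G.Adj v w → Γ v w = 0)
    (b : V → ℝ) (Rhat0 rhat0 : V × V → ℝ)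
    (Rhat rhat : ℕ → V × V → ℝ)
    (hRhat : Rhat = msIter G (fun _ => 2 - 1 / δ) (Khat G δ Γ) Rhat0)
    (hrhat : rhat = msIter G (fun e => b e.1 + (1 - 1 / δ) * b e.2) (Khat G δ Γ) rhat0)
    (r0 q0 R0 Q0 : V → ℝ)
    (hr0 : ∀ v, r0 v = b v + δ * ∑ w ∈ G.neighborFinset v, Γ w v * rhat0 (w, v))
    (hq0 : ∀ v, q0 v = b v - δ * ∑ w ∈ G.neighborFinset v, Γ v w * rhat0 (v, w))
    (hR0 : ∀ v, R0 v = 1 + δ * ∑ w ∈ G.neighborFinset v, Γ w v * Rhat0 (w, v))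
    (hQ0 : ∀ v, Q0 v = 1 - δ * ∑ w ∈ G.neighborFinset v, Γ v w * Rhat0 (v, w))
    (r R : ℕ → V → ℝ)
    (hr : ∀ t v, r t v = ((Kblock G δ Γ) ^ t).mulVec (Sum.elim r0 q0) (Sum.inl v))
    (hR : ∀ t v, R t v = ((Kblock G δ Γ) ^ t).mulVec (Sum.elim R0 Q0) (Sum.inl v)) :
    ∀ t : ℕ, 1 ≤ t → ∀ v : V,
      b v + δ * ∑ w ∈ G.neighborFinset v, Γ w v * rhat t (w, v) = r t v ∧
      1 + δ * ∑ w ∈ G.neighborFinset v, Γ w v * Rhat t (w, v) = R t v ∧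
      (b v + δ * ∑ w ∈ G.neighborFinset v, Γ w v * rhat t (w, v))
          / (1 + δ * ∑ w ∈ G.neighborFinset v, Γ w v * Rhat t (w, v))
        = r t v / R t v := by
  intro t _ v
  have hone : (fun _ : V × V => 2 - 1 / δ)
      = (fun e : V × V => (fun _ : V => (1:ℝ)) e.1 + (1 - 1 / δ) * (fun _ : V => (1:ℝ)) e.2) := by
    funext e; simp; ring
  have hrinit : Sum.elim r0 q0
      = Sum.elim (fun v => b v + δ * ∑ w ∈ G.neighborFinset v, Γ w v * rhat0 (w, v))
          (fun v => b v - δ * ∑ w ∈ G.neighborFinset v, Γ v w * rhat0 (v, w)) := by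
    funext s; cases s <;> simp [hr0, hq0]
  have hRinit : Sum.elim R0 Q0
      = Sum.elim (fun v => (fun _ : V => (1:ℝ)) v + δ * ∑ w ∈ G.neighborFinset v, Γ w v * Rhat0 (w, v))
          (fun v => (fun _ : V => (1:ℝ)) v - δ * ∑ w ∈ G.neighborFinset v, Γ v w * Rhat0 (v, w)) := by
    funext s; cases s <;> simp [hR0, hQ0]
  have h1 : b v + δ * ∑ w ∈ G.neighborFinset v, Γ w v * rhat t (w, v) = r t v := by
    rw [hr t v, hrinit, iter_eq G δ hδ Γ hΓsym hΓ0 b rhat0 t, hrhat]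
    simp
  have h2 : 1 + δ * ∑ w ∈ G.neighborFinset v, Γ w v * Rhat t (w, v) = R t v := by
    rw [hR t v, hRinit, iter_eq G δ hδ Γ hΓsym hΓ0 (fun _ => (1:ℝ)) Rhat0 t, hRhat, hone]
    simp
  exact ⟨h1, h2, by rw [h1, h2]⟩
end

section
/- The matrices K and K^∞ satisfy the identities K·K^∞ = K^∞, K^∞·K = K^∞, and K^∞·K^∞ = K^∞. -/
/-- with `K := [[γW, I], [(1−γ)I, 0]]` and
`K^∞ := (1/((2−γ)n)) [[𝟏𝟏ᵀ, 𝟏𝟏ᵀ], [(1−γ)𝟏𝟏ᵀ, (1−γ)𝟏𝟏ᵀ]]`, where `W` is symmetric,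
`W𝟏 = 𝟏` and `γ ≠ 2`, one has `K·K^∞ = K^∞`, `K^∞·K = K^∞` and `K^∞·K^∞ = K^∞`. -/
theorem stmt_6 (n : ℕ) (hn : 1 ≤ n) (W : Matrix (Fin n) (Fin n) ℝ)
    (hWsym : W.IsSymm) (hW1 : W.mulVec 1 = 1) (γ : ℝ) (hγ : γ ≠ 2)
    (J : Matrix (Fin n) (Fin n) ℝ) (hJ : J = Matrix.of fun _ _ => (1 : ℝ))
    (K Kinf : Matrix (Fin n ⊕ Fin n) (Fin n ⊕ Fin n) ℝ)
    (hK : K = Matrix.fromBlocks (γ • W) 1 ((1 - γ) • (1 : Matrix (Fin n) (Fin n) ℝ)) 0)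
    (hKinf : Kinf = ((2 - γ) * (n : ℝ))⁻¹ •
      Matrix.fromBlocks J J ((1 - γ) • J) ((1 - γ) • J)) :
    K * Kinf = Kinf ∧ Kinf * K = Kinf ∧ Kinf * Kinf = Kinf := by
  have hn0 : (n : ℝ) ≠ 0 := Nat.cast_ne_zero.mpr (by omega)
  have hc : (2 - γ) * (n : ℝ) ≠ 0 := mul_ne_zero (by intro h; apply hγ; linarith) hn0
  have hrow : ∀ i, ∑ k, W i k = 1 := by
    intro i
    have := congrFun hW1 i
    simpa [Matrix.mulVec, dotProduct] using this
  have hcol : ∀ j, ∑ k, W k j = 1 := by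
    intro j
    calc ∑ k, W k j = ∑ k, W j k :=
          Finset.sum_congr rfl fun k _ => hWsym.apply j k
      _ = 1 := hrow j
  have hWJ : W * J = J := by
    ext i j; simp [hJ, Matrix.mul_apply, hrow i]
  have hJW : J * W = J := by
    ext i j; simp [hJ, Matrix.mul_apply, hcol j]
  have hJJ : J * J = (n : ℝ) • J := by
    ext i j; simp [hJ, Matrix.mul_apply, Finset.card_univ]
  subst hK hKinf
  refine ⟨?_, ?_, ?_⟩
  · rw [Matrix.mul_smul, Matrix.fromBlocks_multiply]
    have e1 : γ • W * J + 1 * ((1 - γ) • J) = J := by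
      rw [Matrix.smul_mul, hWJ, one_mul]; module
    have e3 : (1 - γ) • (1 : Matrix (Fin n) (Fin n) ℝ) * J + 0 * ((1 - γ) • J)
        = (1 - γ) • J := by
      rw [Matrix.smul_mul, one_mul, Matrix.zero_mul, add_zero]
    rw [e1, e3]
  · rw [Matrix.smul_mul, Matrix.fromBlocks_multiply]
    have e1 : J * (γ • W) + J * ((1 - γ) • (1 : Matrix (Fin n) (Fin n) ℝ)) = J := by
      rw [Matrix.mul_smul, hJW, Matrix.mul_smul, Matrix.mul_one]; module
    have e2 : J * 1 + J * (0 : Matrix (Fin n) (Fin n) ℝ) = J := by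
      rw [Matrix.mul_one, Matrix.mul_zero, add_zero]
    have e3 : (1 - γ) • J * (γ • W) + (1 - γ) • J * ((1 - γ) • (1 : Matrix (Fin n) (Fin n) ℝ))
        = (1 - γ) • J := by
      rw [Matrix.smul_mul, Matrix.mul_smul, hJW, Matrix.smul_mul, Matrix.mul_smul,
        Matrix.mul_one]; module
    have e4 : (1 - γ) • J * 1 + (1 - γ) • J * (0 : Matrix (Fin n) (Fin n) ℝ)
        = (1 - γ) • J := by
      rw [Matrix.mul_one, Matrix.mul_zero, add_zero]
    rw [e1, e2, e3, e4]
  · rw [Matrix.mul_smul, Matrix.smul_mul, Matrix.fromBlocks_multiply, smul_smul]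
    have e1 : J * J + J * ((1 - γ) • J) = ((2 - γ) * (n : ℝ)) • J := by
      rw [hJJ, Matrix.mul_smul, hJJ]; module
    have e3 : (1 - γ) • J * J + (1 - γ) • J * ((1 - γ) • J)
        = ((2 - γ) * (n : ℝ)) • ((1 - γ) • J) := by
      rw [Matrix.smul_mul, hJJ, Matrix.smul_mul, Matrix.mul_smul, hJJ]; module
    rw [e1, e3, ← Matrix.fromBlocks_smul, smul_smul, mul_assoc,
      inv_mul_cancel₀ hc, mul_one]
end

section
/- For every integer t ≥ 1, (K − K^∞)^t = K^t − K^∞. -/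
/-- with `K := [[γW, I], [(1−γ)I, 0]]` and
`K^∞ := (1/((2−γ)n)) [[𝟏𝟏ᵀ, 𝟏𝟏ᵀ], [(1−γ)𝟏𝟏ᵀ, (1−γ)𝟏𝟏ᵀ]]`, where `W` is symmetric,
`W𝟏 = 𝟏` and `γ ≠ 2`, for every `t ≥ 1` one has `(K − K^∞)^t = K^t − K^∞`. -/
theorem stmt_7 (n : ℕ) (hn : 1 ≤ n) (W : Matrix (Fin n) (Fin n) ℝ)
    (hWsym : W.IsSymm) (hW1 : W.mulVec 1 = 1) (γ : ℝ) (hγ : γ ≠ 2)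
    (J : Matrix (Fin n) (Fin n) ℝ) (hJ : J = Matrix.of fun _ _ => (1 : ℝ))
    (K Kinf : Matrix (Fin n ⊕ Fin n) (Fin n ⊕ Fin n) ℝ)
    (hK : K = Matrix.fromBlocks (γ • W) 1 ((1 - γ) • (1 : Matrix (Fin n) (Fin n) ℝ)) 0)
    (hKinf : Kinf = ((2 - γ) * (n : ℝ))⁻¹ •
      Matrix.fromBlocks J J ((1 - γ) • J) ((1 - γ) • J)) :
    ∀ t : ℕ, 1 ≤ t → (K - Kinf) ^ t = K ^ t - Kinf := by
  set c : ℝ := ((2 - γ) * (n : ℝ))⁻¹ with hc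
  set B : Matrix (Fin n ⊕ Fin n) (Fin n ⊕ Fin n) ℝ :=
    Matrix.fromBlocks J J ((1 - γ) • J) ((1 - γ) • J) with hB
  have hne : (2 - γ) * (n : ℝ) ≠ 0 := by
    have h1 : (2 : ℝ) - γ ≠ 0 := sub_ne_zero.mpr (Ne.symm hγ)
    have h2 : (n : ℝ) ≠ 0 := by positivity
    exact mul_ne_zero h1 h2
  have hcmul : c * ((2 - γ) * (n : ℝ)) = 1 := inv_mul_cancel₀ hne
  have hWJ : W * J = J := by
    ext i j
    have := congrFun hW1 i
    simp [Matrix.mulVec, dotProduct] at this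
    simp [hJ, Matrix.mul_apply, this]
  have hJW : J * W = J := by
    ext i j
    have := congrFun hW1 j
    simp [Matrix.mulVec, dotProduct] at this
    have hsum : ∑ k, W k j = 1 := by
      rw [← this]
      exact Finset.sum_congr rfl fun k _ => by
        rw [← Matrix.IsSymm.apply hWsym j k]
    simp [hJ, Matrix.mul_apply, hsum]
  have hJJ : J * J = (n : ℝ) • J := by
    ext i j
    simp [hJ, Matrix.mul_apply]
  have hKB : K * B = B := by
    rw [hK, hB, Matrix.fromBlocks_multiply]
    congr 1 <;>
      simp [Matrix.smul_mul, Matrix.mul_smul, hWJ, smul_smul] <;> module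
  have hBK : B * K = B := by
    rw [hK, hB, Matrix.fromBlocks_multiply]
    congr 1 <;>
      simp [Matrix.smul_mul, Matrix.mul_smul, hJW, smul_smul] <;> module
  have hBB : B * B = ((2 - γ) * (n : ℝ)) • B := by
    rw [hB, Matrix.fromBlocks_multiply, Matrix.fromBlocks_smul]
    congr 1 <;>
      simp [Matrix.smul_mul, Matrix.mul_smul, hJJ, smul_smul] <;>
      first | module | exact ⟨by module, by module⟩
  have hKKinf : K * Kinf = Kinf := by
    rw [hKinf, Matrix.mul_smul, hKB]
  have hKinfK : Kinf * K = Kinf := by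
    rw [hKinf, Matrix.smul_mul, hBK]
  have hKinf2 : Kinf * Kinf = Kinf := by
    rw [hKinf, Matrix.smul_mul, Matrix.mul_smul, hBB, smul_smul, smul_smul,
      mul_assoc, hcmul, mul_one]
  have hpow : ∀ m : ℕ, K ^ m * Kinf = Kinf := by
    intro m
    induction m with
    | zero => simp
    | succ m ih => rw [pow_succ, mul_assoc, hKKinf, ih]
  have main : ∀ t : ℕ, (K - Kinf) ^ (t + 1) = K ^ (t + 1) - Kinf := by
    intro t
    induction t with
    | zero => simp
    | succ t ih =>
      rw [pow_succ, ih, sub_mul, mul_sub, mul_sub, hpow, hKinfK, hKinf2,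
        ← pow_succ]
      abel
  intro t ht
  obtain ⟨s, rfl⟩ := Nat.exists_eq_add_of_le ht
  rw [Nat.add_comm 1 s]
  exact main s
end

section
/- Define (R^t, Q^t)ᵀ := K^t (𝟏, 𝟏)ᵀ and (R^∞, Q^∞)ᵀ := K^∞ (𝟏, 𝟏)ᵀ. Then for every t ≥ 1, ‖R^t − R^∞‖ ≤ ‖(K − K^∞)^t‖ · (γ/(2−γ)) · √(2n), where ‖·‖ denotes the Euclidean norm for vectors and the ℓ2 operator norm for matrices. -/
open Finset

/-- The Euclidean (ℓ2) norm of a vector indexed by a finite type. -/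
noncomputable def evnorm {ι : Type*} [Fintype ι] (x : ι → ℝ) : ℝ :=
  Real.sqrt (∑ i, x i ^ 2)

/-- The ℓ2 operator norm of a square real matrix. -/
noncomputable def l2opNorm {ι : Type*} [Fintype ι] [DecidableEq ι]
    (M : Matrix ι ι ℝ) : ℝ :=
  ‖Matrix.toEuclideanCLM (𝕜 := ℝ) M‖

lemma evnorm_eq {ι : Type*} [Fintype ι] (x : ι → ℝ) :
    evnorm x = ‖(WithLp.equiv 2 (ι → ℝ)).symm x‖ := by
  rw [EuclideanSpace.norm_eq, evnorm]
  congr 1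
  refine Finset.sum_congr rfl fun i _ => ?_
  simp [Real.norm_eq_abs, sq_abs]

lemma evnorm_mulVec_le {ι : Type*} [Fintype ι] [DecidableEq ι] (M : Matrix ι ι ℝ) (x : ι → ℝ) :
    evnorm (M.mulVec x) ≤ l2opNorm M * evnorm x := by
  rw [evnorm_eq, evnorm_eq]
  have h := (Matrix.toEuclideanCLM (𝕜 := ℝ) M).le_opNorm ((WithLp.equiv 2 (ι → ℝ)).symm x)
  exact h

lemma evnorm_inl_le {α β : Type*} [Fintype α] [Fintype β] (f : α ⊕ β → ℝ) :
    evnorm (fun v => f (Sum.inl v)) ≤ evnorm f := by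
  apply Real.sqrt_le_sqrt
  rw [Fintype.sum_sum_type]
  exact le_add_of_nonneg_right (Finset.sum_nonneg fun i _ => sq_nonneg _)

/-- with `(R^t, Q^t) := K^t (𝟏,𝟏)` and `(R^∞, Q^∞) := K^∞ (𝟏,𝟏)`,
for every `t ≥ 1`, `‖R^t − R^∞‖ ≤ ‖(K − K^∞)^t‖ · (γ/(2−γ)) · √(2n)`. -/
theorem stmt_9 (n : ℕ) (hn : 1 ≤ n) (W : Matrix (Fin n) (Fin n) ℝ)
    (hWsym : W.IsSymm) (hW1 : W.mulVec 1 = 1) (γ : ℝ) (hγ0 : 0 ≤ γ) (hγ2 : γ < 2)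
    (J : Matrix (Fin n) (Fin n) ℝ) (hJ : J = Matrix.of fun _ _ => (1 : ℝ))
    (K Kinf : Matrix (Fin n ⊕ Fin n) (Fin n ⊕ Fin n) ℝ)
    (hK : K = Matrix.fromBlocks (γ • W) 1 ((1 - γ) • (1 : Matrix (Fin n) (Fin n) ℝ)) 0)
    (hKinf : Kinf = ((2 - γ) * (n : ℝ))⁻¹ •
      Matrix.fromBlocks J J ((1 - γ) • J) ((1 - γ) • J))
    (R : ℕ → Fin n → ℝ)
    (hR : ∀ t v, R t v = (K ^ t).mulVec (Sum.elim (1 : Fin n → ℝ) (1 : Fin n → ℝ)) (Sum.inl v))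
    (Rinf : Fin n → ℝ)
    (hRinf : ∀ v, Rinf v = Kinf.mulVec (Sum.elim (1 : Fin n → ℝ) (1 : Fin n → ℝ)) (Sum.inl v)) :
    ∀ t : ℕ, 1 ≤ t →
      evnorm (fun v => R t v - Rinf v) ≤
        l2opNorm ((K - Kinf) ^ t) * (γ / (2 - γ)) * Real.sqrt (2 * n) := by
  have hnR : (0:ℝ) < (n:ℝ) := by exact_mod_cast hn
  have h2γ : (0:ℝ) < 2 - γ := by linarith
  have hc : ((2 - γ) * (n:ℝ)) ≠ 0 := by positivity
  set B : Matrix (Fin n ⊕ Fin n) (Fin n ⊕ Fin n) ℝ :=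
    Matrix.fromBlocks J J ((1 - γ) • J) ((1 - γ) • J) with hB
  have hWJ : W * J = J := by
    ext i j
    have h := congrFun hW1 i
    simp [Matrix.mulVec, dotProduct] at h
    simp [Matrix.mul_apply, hJ, h]
  have hJW : J * W = J := by
    ext i j
    have h := congrFun hW1 j
    simp [Matrix.mulVec, dotProduct] at h
    have hsym : ∀ k, W k j = W j k := fun k => by
      have := congrFun (congrFun hWsym k) j
      simpa [Matrix.transpose_apply] using this.symm
    have hss : ∑ k, W k j = ∑ k, W j k := Finset.sum_congr rfl fun k _ => hsym k
    simp [Matrix.mul_apply, hJ, hss, h]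
  have hJJ : J * J = (n:ℝ) • J := by
    ext i j
    simp [Matrix.mul_apply, hJ, Matrix.smul_apply]
  have hKB : K * B = B := by
    rw [hK, hB, Matrix.fromBlocks_multiply, Matrix.fromBlocks_inj]
    refine ⟨?_, ?_, ?_, ?_⟩
    · rw [Matrix.smul_mul, hWJ, Matrix.one_mul]; module
    · rw [Matrix.smul_mul, hWJ, Matrix.one_mul]; module
    · rw [Matrix.smul_mul, Matrix.one_mul, Matrix.zero_mul, add_zero]
    · rw [Matrix.smul_mul, Matrix.one_mul, Matrix.zero_mul, add_zero]
  have hBK : B * K = B := by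
    rw [hK, hB, Matrix.fromBlocks_multiply, Matrix.fromBlocks_inj]
    refine ⟨?_, ?_, ?_, ?_⟩
    · rw [Matrix.mul_smul, hJW, Matrix.mul_smul, Matrix.mul_one]; module
    · rw [Matrix.mul_one, Matrix.mul_zero, add_zero]
    · rw [Matrix.smul_mul, Matrix.mul_smul, hJW, Matrix.smul_mul, Matrix.mul_smul,
        Matrix.mul_one]
      module
    · rw [Matrix.smul_mul, Matrix.mul_one, Matrix.mul_zero, add_zero]
  have hBB : B * B = ((2 - γ) * (n:ℝ)) • B := by
    rw [hB, Matrix.fromBlocks_multiply, Matrix.fromBlocks_smul, Matrix.fromBlocks_inj]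
    refine ⟨?_, ?_, ?_, ?_⟩ <;>
      simp only [Matrix.smul_mul, Matrix.mul_smul, hJJ, smul_smul] <;> module
  have hKKinf : K * Kinf = Kinf := by
    rw [hKinf, Matrix.mul_smul, hKB]
  have hKinfK : Kinf * K = Kinf := by
    rw [hKinf, Matrix.smul_mul, hBK]
  have hKinf2 : Kinf * Kinf = Kinf := by
    rw [hKinf, Matrix.smul_mul, Matrix.mul_smul, hBB, smul_smul, smul_smul]
    congr 1
    field_simp
  have hKt : ∀ t : ℕ, K ^ t * Kinf = Kinf := by
    intro t
    induction t with
    | zero => simp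
    | succ s ih => rw [pow_succ, mul_assoc, hKKinf, ih]
  have hpow : ∀ t : ℕ, 1 ≤ t → (K - Kinf) ^ t = K ^ t - Kinf := by
    intro t ht
    induction t with
    | zero => omega
    | succ s ih =>
      rcases Nat.eq_or_lt_of_le ht with h1 | h1
      · simp [← h1]
      · have hs : 1 ≤ s := by omega
        rw [pow_succ, ih hs, sub_mul, mul_sub, mul_sub, hKinfK, hKinf2, hKt, ← pow_succ]
        abel
  have hz : ∀ t : ℕ, 1 ≤ t → (K - Kinf) ^ t * Kinf = 0 := by
    intro t ht
    obtain ⟨s, rfl⟩ : ∃ s, t = s + 1 := ⟨t - 1, by omega⟩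
    rw [pow_succ, mul_assoc, sub_mul, hKKinf, hKinf2, sub_self, mul_zero]
  intro t ht
  set x : Fin n ⊕ Fin n → ℝ := Sum.elim (1 : Fin n → ℝ) (1 : Fin n → ℝ) with hx
  set y : Fin n ⊕ Fin n → ℝ := x - Kinf.mulVec x with hyd
  have hy : y = Sum.elim (fun _ => -(γ/(2-γ))) (fun _ => γ/(2-γ)) := by
    funext i
    have hKix : ∀ i, Kinf.mulVec x i =
        ((2 - γ) * (n:ℝ))⁻¹ * (Sum.elim (fun _ : Fin n => 2 * (n:ℝ))
          (fun _ : Fin n => (1-γ) * (2 * (n:ℝ))) i) := by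
      intro i
      cases i with
      | inl v =>
        simp [hKinf, hB, hJ, hx, Matrix.mulVec, dotProduct, Fintype.sum_sum_type,
          Matrix.fromBlocks, mul_comm, mul_assoc, mul_left_comm]
        ring
      | inr v =>
        simp [hKinf, hB, hJ, hx, Matrix.mulVec, dotProduct, Fintype.sum_sum_type,
          Matrix.fromBlocks, mul_comm, mul_assoc, mul_left_comm]
        ring
    cases i with
    | inl v =>
      rw [hyd, Pi.sub_apply, hKix]
      simp only [hyd, Pi.sub_apply, hKix, hx, Sum.elim_inl, Pi.one_apply]
      field_simp
      ring
    | inr v =>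
      rw [hyd, Pi.sub_apply, hKix]
      simp only [hyd, Pi.sub_apply, hKix, hx, Sum.elim_inr, Pi.one_apply]
      field_simp
      ring
  have hyn : evnorm y = (γ / (2 - γ)) * Real.sqrt (2 * n) := by
    rw [evnorm, hy]
    have hs : ∑ i : Fin n ⊕ Fin n, (Sum.elim (fun _ : Fin n => -(γ/(2-γ)))
        (fun _ : Fin n => γ/(2-γ)) i) ^ 2 = (γ/(2-γ))^2 * (2 * n) := by
      rw [Fintype.sum_sum_type]
      simp
      ring
    rw [hs, Real.sqrt_mul (sq_nonneg _), Real.sqrt_sq (by positivity)]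
  have key : (fun v => R t v - Rinf v) =
      fun v => ((K - Kinf) ^ t).mulVec y (Sum.inl v) := by
    funext v
    rw [hR, hRinf]
    have h2 : ((K - Kinf) ^ t).mulVec (Kinf.mulVec x) = 0 := by
      rw [Matrix.mulVec_mulVec, hz t ht, Matrix.zero_mulVec]
    have h1 : (K ^ t).mulVec x - Kinf.mulVec x = ((K - Kinf) ^ t).mulVec y := by
      rw [hyd, Matrix.mulVec_sub, h2, sub_zero, hpow t ht, Matrix.sub_mulVec]
    exact (congrFun h1 (Sum.inl v))
  rw [key]
  calc evnorm (fun v => ((K - Kinf) ^ t).mulVec y (Sum.inl v))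
      ≤ evnorm (((K - Kinf) ^ t).mulVec y) := evnorm_inl_le _
    _ ≤ l2opNorm ((K - Kinf) ^ t) * evnorm y := evnorm_mulVec_le _ _
    _ = l2opNorm ((K - Kinf) ^ t) * (γ / (2 - γ)) * Real.sqrt (2 * n) := by
        rw [hyn]; ring
end

section
/- For every real z with 0 ≤ z ≤ 1, the following two inequalities hold: 1 − 2z ≤ √((1 − √(1 − (1 − z²)²)) / (1 + √(1 − (1 − z²)²))) and √((1 − √(1 − (1 − z²)²)) / (1 + √(1 − (1 − z²)²))) ≤ 1 − z. -/
/-- For every real `z` with `0 ≤ z ≤ 1`,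
`1 − 2z ≤ √((1 − √(1 − (1 − z²)²)) / (1 + √(1 − (1 − z²)²))) ≤ 1 − z`. -/
theorem stmt_12 (z : ℝ) (hz0 : 0 ≤ z) (hz1 : z ≤ 1) :
    1 - 2 * z ≤
      Real.sqrt ((1 - Real.sqrt (1 - (1 - z ^ 2) ^ 2)) / (1 + Real.sqrt (1 - (1 - z ^ 2) ^ 2))) ∧
    Real.sqrt ((1 - Real.sqrt (1 - (1 - z ^ 2) ^ 2)) / (1 + Real.sqrt (1 - (1 - z ^ 2) ^ 2))) ≤
      1 - z := by
  have hz2 : z ^ 2 ≤ 1 := by nlinarith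
  have hkey : 1 - (1 - z ^ 2) ^ 2 = z ^ 2 * (2 - z ^ 2) := by ring
  set t := Real.sqrt (2 - z ^ 2) with htdef
  have ht0 : 0 ≤ t := Real.sqrt_nonneg _
  have ht2 : t ^ 2 = 2 - z ^ 2 := Real.sq_sqrt (by nlinarith)
  have ht1 : 1 ≤ t := by nlinarith
  have hst : Real.sqrt (1 - (1 - z ^ 2) ^ 2) = z * t := by
    rw [hkey, htdef, ← Real.sqrt_sq hz0, ← Real.sqrt_mul (sq_nonneg z), Real.sqrt_sq hz0]
  rw [hst]
  have hzt : 0 ≤ z * t := mul_nonneg hz0 ht0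
  have hden : (0 : ℝ) < 1 + z * t := by linarith
  constructor
  · rcases le_or_gt (1 - 2 * z) 0 with h | h
    · exact h.trans (Real.sqrt_nonneg _)
    · have ht : t * (2 - 4 * z + 4 * z ^ 2) ≤ 4 * (1 - z) := by
        have hsum : 0 < t * (2 - 4 * z + 4 * z ^ 2) + 4 * (1 - z) := by
          nlinarith [sq_nonneg (1 - 2 * z)]
        nlinarith [ht2, hsum, sq_nonneg (1 - 2 * z), sq_nonneg z, sq_nonneg (z * (1 - 2 * z)),
          mul_nonneg hz0 (sq_nonneg (1 - 2 * z)), sq_nonneg (z - 1), mul_nonneg hz0 hz0]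
      have hq : (1 - 2 * z) ^ 2 ≤ (1 - z * t) / (1 + z * t) := by
        rw [le_div_iff₀ hden]
        nlinarith [mul_le_mul_of_nonneg_left ht hz0]
      calc 1 - 2 * z = Real.sqrt ((1 - 2 * z) ^ 2) := (Real.sqrt_sq h.le).symm
        _ ≤ _ := Real.sqrt_le_sqrt hq
  · have ht : 2 - z ≤ t * (2 - 2 * z + z ^ 2) := by
      have hsum : 0 < t * (2 - 2 * z + z ^ 2) + (2 - z) := by nlinarith [sq_nonneg (1 - z)]
      nlinarith [ht2, hsum, sq_nonneg (1 - z), mul_nonneg hz0 (sq_nonneg (1 - z)),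
        sq_nonneg (z * (1 - z)), mul_nonneg hz0 hz0, sq_nonneg z]
    have hq : (1 - z * t) / (1 + z * t) ≤ (1 - z) ^ 2 := by
      rw [div_le_iff₀ hden]
      nlinarith [mul_le_mul_of_nonneg_left ht hz0]
    calc Real.sqrt ((1 - z * t) / (1 + z * t)) ≤ Real.sqrt ((1 - z) ^ 2) := Real.sqrt_le_sqrt hq
      _ = 1 - z := Real.sqrt_sq (by linarith)
end

section
/- Let ρ ∈ [0, 1) and define ρ_K := √((1 − √(1 − ρ²)) / (1 + √(1 − ρ²))). Then (1/2)·√(1/(1 − ρ)) ≤ 1/(1 − ρ_K) ≤ √(1/(1 − ρ)). -/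
private lemma le_of_sq_le_sq' (a b : ℝ) (ha : 0 ≤ a) (hb : 0 ≤ b) (h : a^2 ≤ b^2) :
    a ≤ b := by nlinarith

set_option maxHeartbeats 1600000 in
/-- For `ρ ∈ [0,1)` and `ρ_K := √((1 − √(1 − ρ²)) / (1 + √(1 − ρ²)))`,
one has `(1/2)·√(1/(1 − ρ)) ≤ 1/(1 − ρ_K) ≤ √(1/(1 − ρ))`. -/
theorem stmt_13 (ρ : ℝ) (hρ0 : 0 ≤ ρ) (hρ1 : ρ < 1)
    (ρK : ℝ)
    (hρK : ρK = Real.sqrt ((1 - Real.sqrt (1 - ρ ^ 2)) / (1 + Real.sqrt (1 - ρ ^ 2)))) :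
    (1 / 2) * Real.sqrt (1 / (1 - ρ)) ≤ 1 / (1 - ρK) ∧
    1 / (1 - ρK) ≤ Real.sqrt (1 / (1 - ρ)) := by
  have h1ρ : 0 < 1 - ρ := by linarith
  set t := Real.sqrt (1 - ρ) with ht
  have ht2 : t ^ 2 = 1 - ρ := Real.sq_sqrt h1ρ.le
  have ht0 : 0 < t := Real.sqrt_pos.mpr h1ρ
  have ht1 : t ≤ 1 := by nlinarith
  have hρ2 : 0 < 1 - ρ ^ 2 := by nlinarith
  set s := Real.sqrt (1 - ρ ^ 2) with hs
  have hs2 : s ^ 2 = 1 - ρ ^ 2 := Real.sq_sqrt hρ2.le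
  have hs0 : 0 < s := Real.sqrt_pos.mpr hρ2
  have hs1 : s ≤ 1 := by nlinarith
  have hst : s ^ 2 = t ^ 2 * (2 - t ^ 2) := by nlinarith
  have hden : 0 < 1 + s := by linarith
  have hq0 : 0 ≤ (1 - s) / (1 + s) := div_nonneg (by linarith) hden.le
  have hK2 : ρK ^ 2 = (1 - s) / (1 + s) := by rw [hρK]; exact Real.sq_sqrt hq0
  have hK0 : 0 ≤ ρK := hρK ▸ Real.sqrt_nonneg _
  have hKid : ρK ^ 2 * (1 + s) = 1 - s := by rw [hK2]; field_simp
  have hK1 : ρK < 1 := by nlinarith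
  have hKlt : 0 < 1 - ρK := by linarith
  -- upper bound: ρK ≤ 1 - t
  have h1t : 0 ≤ 1 - t := by linarith
  have hbr1 : (2 - t) ^ 2 ≤ (2 - t ^ 2) * (2 - 2 * t + t ^ 2) ^ 2 := by
    have hc : 0 ≤ (1 - t) ^ 3 * (t ^ 3 - t ^ 2 + 4) :=
      mul_nonneg (pow_nonneg h1t 3) (by nlinarith)
    nlinarith [hc]
  have key1 : t * (2 - t) ≤ s * (2 - 2 * t + t ^ 2) := by
    apply le_of_sq_le_sq' _ _ (by nlinarith) (by nlinarith)
    have h4 := mul_le_mul_of_nonneg_left hbr1 (sq_nonneg t)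
    have h3 : s ^ 2 * (2 - 2 * t + t ^ 2) ^ 2 =
        t ^ 2 * ((2 - t ^ 2) * (2 - 2 * t + t ^ 2) ^ 2) := by
      linear_combination (2 - 2 * t + t ^ 2) ^ 2 * hst
    calc (t * (2 - t)) ^ 2 = t ^ 2 * (2 - t) ^ 2 := by ring
    _ ≤ t ^ 2 * ((2 - t ^ 2) * (2 - 2 * t + t ^ 2) ^ 2) := h4
    _ = (s * (2 - 2 * t + t ^ 2)) ^ 2 := by linear_combination -h3
  have hup : ρK ≤ 1 - t := by
    apply le_of_sq_le_sq' _ _ hK0 h1t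
    have hr : (1 - t) ^ 2 * (1 + s) - (1 - s) = s * (2 - 2 * t + t ^ 2) - t * (2 - t) := by
      ring
    have h2 : ρK ^ 2 * (1 + s) ≤ (1 - t) ^ 2 * (1 + s) := by linarith
    exact le_of_mul_le_mul_right h2 hden
  -- lower bound: 1 - 2t ≤ ρK
  have hlow : 1 - 2 * t ≤ ρK := by
    rcases le_or_gt (1 - 2 * t) 0 with h | h
    · linarith
    · have ht12 : t ≤ 1 / 2 := by linarith
      have h12 : 0 ≤ 1 - 2 * t := by linarith
      have h5 : t ^ 5 ≤ (1 / 2 : ℝ) ^ 5 := pow_le_pow_left₀ ht0.le ht12 5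
      have ha : 0 ≤ (1 - 2 * t) * (-24 * t ^ 2 + 10 * t + 5) := by
        have hq : 0 ≤ t * (1 - 2 * t) := mul_nonneg ht0.le h12
        have : 0 ≤ -24 * t ^ 2 + 10 * t + 5 := by nlinarith [hq, ht0.le, h12]
        exact mul_nonneg h12 this
      have hb : 16 * t ^ 5 * (2 - t) ≤ 1 := by
        have := mul_le_mul h5 (show 2 - t ≤ 2 by linarith)
          (by linarith) (by norm_num)
        nlinarith [this]
      have hid : 16 * t ^ 6 - 32 * t ^ 5 + 48 * t ^ 3 - 44 * t ^ 2 + 8 =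
          (1 - 2 * t) * (-24 * t ^ 2 + 10 * t + 5) +
          (1 - 16 * t ^ 5 * (2 - t)) + 2 := by ring
      have hE : 0 ≤ 16 * t ^ 6 - 32 * t ^ 5 + 48 * t ^ 3 - 44 * t ^ 2 + 8 := by
        linarith [ha, hb, hid]
      have hid2 : 16 * (1 - t) ^ 2 - (2 - t ^ 2) * (2 - 4 * t + 4 * t ^ 2) ^ 2 =
          16 * t ^ 6 - 32 * t ^ 5 + 48 * t ^ 3 - 44 * t ^ 2 + 8 := by ring
      have hbr2 : (2 - t ^ 2) * (2 - 4 * t + 4 * t ^ 2) ^ 2 ≤ 16 * (1 - t) ^ 2 := by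
        linarith [hE, hid2]
      have key2 : s * (2 - 4 * t + 4 * t ^ 2) ≤ 4 * t * (1 - t) := by
        apply le_of_sq_le_sq' _ _
          (mul_nonneg hs0.le (by nlinarith [sq_nonneg (2 * t - 1)]))
          (mul_nonneg (by linarith) (by linarith))
        have h4 := mul_le_mul_of_nonneg_left hbr2 (sq_nonneg t)
        have h3 : s ^ 2 * (2 - 4 * t + 4 * t ^ 2) ^ 2 =
            t ^ 2 * ((2 - t ^ 2) * (2 - 4 * t + 4 * t ^ 2) ^ 2) := by
          linear_combination (2 - 4 * t + 4 * t ^ 2) ^ 2 * hst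
        calc (s * (2 - 4 * t + 4 * t ^ 2)) ^ 2
            = t ^ 2 * ((2 - t ^ 2) * (2 - 4 * t + 4 * t ^ 2) ^ 2) := by
              linear_combination h3
        _ ≤ t ^ 2 * (16 * (1 - t) ^ 2) := h4
        _ = (4 * t * (1 - t)) ^ 2 := by ring
      apply le_of_sq_le_sq' _ _ h12 hK0
      have hr : (1 - s) - (1 - 2 * t) ^ 2 * (1 + s) =
          4 * t * (1 - t) - s * (2 - 4 * t + 4 * t ^ 2) := by ring
      have h2 : (1 - 2 * t) ^ 2 * (1 + s) ≤ ρK ^ 2 * (1 + s) := by linarith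
      exact le_of_mul_le_mul_right h2 hden
  -- conclude
  have hsqrt : Real.sqrt (1 / (1 - ρ)) = 1 / t := by
    rw [one_div, Real.sqrt_inv, ← ht, one_div]
  constructor
  · rw [hsqrt]
    have h2t : 1 - ρK ≤ 2 * t := by linarith
    have := one_div_le_one_div_of_le hKlt h2t
    calc (1 / 2) * (1 / t) = 1 / (2 * t) := by ring
    _ ≤ 1 / (1 - ρK) := this
  · rw [hsqrt]
    exact one_div_le_one_div_of_le ht0 (by linarith)
end
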